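/- arXiv:1802.05724 — 2 statements merged into one kernel-verified Lean document; each statement's English description precedes it below -/
import Mathlib

section
/- Let p>1 and p1 = -1/(p-1), and define g(u) = (1-u)(1-p1·u)^{-1/p1}. Then g restricted to [0,1] is a strictly decreasing continuous bijection from [0,1] onto [0,1] (with g(0)=1 and g(1)=0), and g restricted to [1/p1, 0] is a strictly increasing continuous bijection from [1/p1, 0] onto [0,1] (with g(1/p1)=0 and g(0)=1). Consequently, for every t ∈ [0,1] the equation g(u) = t has exactly one solution u⁺_{p1}(t) in [0,1] and exactly one solution u⁻_{p1}(t) in [1/p1, 0]; the function t ↦ u⁺_{p1}(t) is a decreasing bijection of [0,1] onto [0,1], and t ↦ u⁻_{p1}(t) is an increasing bijection of [0,1] onto [1/p1, 0]. -/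
open Set Filter

noncomputable section

/-- The function `g(u) = (1-u)(1-p1·u)^{-1/p1}` (with `p1 = -1/(p-1) < 0`)
is a strictly decreasing continuous bijection of `[0,1]` onto `[0,1]` and a strictly
increasing continuous bijection of `[1/p1, 0]` onto `[0,1]`; consequently for every
`t ∈ [0,1]` the equation `g(u) = t` has exactly one solution `u⁺_{p1}(t)` in `[0,1]` and
exactly one solution `u⁻_{p1}(t)` in `[1/p1, 0]`; `u⁺` is a decreasing bijection of `[0,1]`
onto `[0,1]` and `u⁻` an increasing bijection of `[0,1]` onto `[1/p1, 0]`. -/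
theorem Ap_defining_equation_solutions
    (p p1 : ℝ) (hp : 1 < p) (hp1 : p1 = -1 / (p - 1))
    (g : ℝ → ℝ) (hg : ∀ u : ℝ, g u = (1 - u) * (1 - p1 * u) ^ (-1 / p1)) :
    StrictAntiOn g (Icc 0 1) ∧ ContinuousOn g (Icc 0 1) ∧ g '' Icc 0 1 = Icc 0 1 ∧
    g 0 = 1 ∧ g 1 = 0 ∧
    StrictMonoOn g (Icc (1 / p1) 0) ∧ ContinuousOn g (Icc (1 / p1) 0) ∧
    g '' Icc (1 / p1) 0 = Icc 0 1 ∧ g (1 / p1) = 0 ∧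
    (∀ t ∈ Icc (0:ℝ) 1,
      (∃! u, u ∈ Icc (0:ℝ) 1 ∧ g u = t) ∧ (∃! u, u ∈ Icc (1 / p1) 0 ∧ g u = t)) ∧
    (∃ uplus : ℝ → ℝ,
      (∀ t ∈ Icc (0:ℝ) 1, uplus t ∈ Icc (0:ℝ) 1 ∧ g (uplus t) = t) ∧
      StrictAntiOn uplus (Icc 0 1) ∧ uplus '' Icc 0 1 = Icc 0 1) ∧
    (∃ uminus : ℝ → ℝ,
      (∀ t ∈ Icc (0:ℝ) 1, uminus t ∈ Icc (1 / p1) 0 ∧ g (uminus t) = t) ∧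
      StrictMonoOn uminus (Icc 0 1) ∧ uminus '' Icc 0 1 = Icc (1 / p1) 0) := by
  have hc : 0 < p - 1 := by linarith
  have hcne : p - 1 ≠ 0 := ne_of_gt hc
  have hp1neg : p1 < 0 := by rw [hp1]; exact div_neg_of_neg_of_pos (by norm_num) hc
  have hp1ne : p1 ≠ 0 := ne_of_lt hp1neg
  have hep : -1 / p1 = p - 1 := by rw [hp1]; field_simp
  have hmul : p1 * (p - 1) = -1 := by rw [hp1]; field_simp
  have hinv : 1 / p1 < 0 := one_div_neg.2 hp1neg
  have hg' : ∀ u : ℝ, g u = (1 - u) * (1 - p1 * u) ^ (p - 1) := by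
    intro u; rw [hg u, hep]
  -- continuity
  have hcont : Continuous g := by
    rw [show g = fun u : ℝ => (1 - u) * (1 - p1 * u) ^ (p - 1) from funext hg']
    refine Continuous.mul (by continuity) ?_
    rw [continuous_iff_continuousAt]
    intro x
    exact (Real.continuousAt_rpow_const _ _ (Or.inr hc.le)).comp (by fun_prop)
  -- derivative
  have hderiv : ∀ u : ℝ, 0 < 1 - p1 * u →
      HasDerivAt g ((p1 - 1) * u * (1 - p1 * u) ^ (p - 1 - 1)) u := by
    rw [show g = fun u : ℝ => (1 - u) * (1 - p1 * u) ^ (p - 1) from funext hg']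
    intro u hu
    have h2 : HasDerivAt (fun u : ℝ => 1 - p1 * u) (-p1) u := by
      simpa using ((hasDerivAt_id u).const_mul p1).const_sub 1
    have h3 : HasDerivAt (fun u : ℝ => (1 - p1 * u) ^ (p - 1))
        ((p - 1) * (1 - p1 * u) ^ (p - 1 - 1) * (-p1)) u :=
      by have := (Real.hasDerivAt_rpow_const (p := p - 1) (Or.inl (ne_of_gt hu))).comp u h2; exact this
    have h1 : HasDerivAt (fun u : ℝ => 1 - u) (-1) u := by
      simpa using (hasDerivAt_id u).const_sub 1
    have h := h1.mul h3
    refine h.congr_deriv ?_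
    have hsplit : (1 - p1 * u) ^ (p - 1) = (1 - p1 * u) ^ (p - 1 - 1) * (1 - p1 * u) := by
      rw [← Real.rpow_add_one (ne_of_gt hu) (p - 1 - 1)]; ring_nf
    rw [hsplit]
    linear_combination (-((1 - p1 * u) ^ (p - 1 - 1) * (1 - u))) * hmul
  -- base positivity
  have hbase1 : ∀ u : ℝ, 0 ≤ u → 0 < 1 - p1 * u := by
    intro u hu; nlinarith
  have hbase2 : ∀ u : ℝ, 1 / p1 < u → 0 < 1 - p1 * u := by
    intro u hu
    have := mul_lt_mul_of_neg_left hu hp1neg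
    rw [mul_one_div, div_self hp1ne] at this
    linarith
  -- values at endpoints
  have hg0 : g 0 = 1 := by rw [hg' 0]; simp
  have hg1 : g 1 = 0 := by rw [hg' 1]; simp
  have hgend : g (1 / p1) = 0 := by
    rw [hg' (1 / p1)]
    have : 1 - p1 * (1 / p1) = 0 := by field_simp; norm_num
    rw [this, Real.zero_rpow hcne, mul_zero]
  -- strict antitonicity on [0,1]
  have hant : StrictAntiOn g (Icc 0 1) := by
    apply strictAntiOn_of_deriv_neg (convex_Icc 0 1) hcont.continuousOn
    intro x hx
    rw [interior_Icc] at hx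
    have hb : 0 < 1 - p1 * x := hbase1 x hx.1.le
    rw [(hderiv x hb).deriv]
    have hA : 0 < (1 - p1 * x) ^ (p - 1 - 1) := Real.rpow_pos_of_pos hb _
    have : (p1 - 1) * x < 0 := mul_neg_of_neg_of_pos (by linarith) hx.1
    nlinarith
  -- strict monotonicity on [1/p1, 0]
  have hmon : StrictMonoOn g (Icc (1 / p1) 0) := by
    apply strictMonoOn_of_deriv_pos (convex_Icc _ _) hcont.continuousOn
    intro x hx
    rw [interior_Icc] at hx
    have hb : 0 < 1 - p1 * x := hbase2 x hx.1
    rw [(hderiv x hb).deriv]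
    have hA : 0 < (1 - p1 * x) ^ (p - 1 - 1) := Real.rpow_pos_of_pos hb _
    have : 0 < (p1 - 1) * x := mul_pos_of_neg_of_neg (by linarith) hx.2
    nlinarith
  -- images
  have himg1 : g '' Icc 0 1 = Icc 0 1 := by
    apply Subset.antisymm
    · rintro _ ⟨u, hu, rfl⟩
      constructor
      · rw [hg' u]
        have h1 := Real.rpow_nonneg (hbase1 u hu.1).le (p - 1)
        have h2 : 0 ≤ 1 - u := by linarith [hu.2]
        positivity
      · have := hant.antitoneOn (left_mem_Icc.2 (by norm_num)) hu hu.1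
        rw [hg0] at this; exact this
    · have h := intermediate_value_Icc' (by norm_num : (0:ℝ) ≤ 1) hcont.continuousOn
      rw [hg0, hg1] at h; exact h
  have himg2 : g '' Icc (1 / p1) 0 = Icc 0 1 := by
    apply Subset.antisymm
    · rintro _ ⟨u, hu, rfl⟩
      constructor
      · have := hmon.monotoneOn (left_mem_Icc.2 hinv.le) hu hu.1
        rw [hgend] at this; exact this
      · have := hmon.monotoneOn hu (right_mem_Icc.2 hinv.le) hu.2
        rw [hg0] at this; exact this
    · have h := intermediate_value_Icc hinv.le hcont.continuousOn
      rw [hg0, hgend] at h; exact h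
  -- uniqueness
  have huniq : ∀ t ∈ Icc (0:ℝ) 1,
      (∃! u, u ∈ Icc (0:ℝ) 1 ∧ g u = t) ∧ (∃! u, u ∈ Icc (1 / p1) 0 ∧ g u = t) := by
    intro t ht
    constructor
    · obtain ⟨u, hu, hgu⟩ := show t ∈ g '' Icc 0 1 by rw [himg1]; exact ht
      exact ⟨u, ⟨hu, hgu⟩, fun v ⟨hv, hgv⟩ => hant.injOn hv hu (by rw [hgv, hgu])⟩
    · obtain ⟨u, hu, hgu⟩ := show t ∈ g '' Icc (1 / p1) 0 by rw [himg2]; exact ht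
      exact ⟨u, ⟨hu, hgu⟩, fun v ⟨hv, hgv⟩ => hmon.injOn hv hu (by rw [hgv, hgu])⟩
  -- uplus
  have hexP : ∀ t ∈ Icc (0:ℝ) 1, ∃ u, u ∈ Icc (0:ℝ) 1 ∧ g u = t := by
    intro t ht
    have ht' : t ∈ g '' Icc 0 1 := by rw [himg1]; exact ht
    exact ht'
  choose! uplus hup using hexP
  have hupA : StrictAntiOn uplus (Icc 0 1) := by
    intro a ha b hb hab
    by_contra hcon
    push_neg at hcon
    have h1 := hup a ha
    have h2 := hup b hb
    rcases eq_or_lt_of_le hcon with heq | hlt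
    · have : a = b := by rw [← h1.2, ← h2.2, heq]
      exact absurd this (ne_of_lt hab)
    · have := hant h1.1 h2.1 hlt
      rw [h1.2, h2.2] at this; linarith
  have hupI : uplus '' Icc 0 1 = Icc 0 1 := by
    apply Subset.antisymm
    · rintro _ ⟨t, ht, rfl⟩; exact (hup t ht).1
    · intro u hu
      have ht : g u ∈ Icc (0:ℝ) 1 := by rw [← himg1]; exact mem_image_of_mem g hu
      have h1 := hup (g u) ht
      exact ⟨g u, ht, hant.injOn h1.1 hu h1.2⟩
  -- uminus
  have hexM : ∀ t ∈ Icc (0:ℝ) 1, ∃ u, u ∈ Icc (1 / p1) 0 ∧ g u = t := by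
    intro t ht
    have ht' : t ∈ g '' Icc (1 / p1) 0 := by rw [himg2]; exact ht
    exact ht'
  choose! uminus hum using hexM
  have humM : StrictMonoOn uminus (Icc 0 1) := by
    intro a ha b hb hab
    by_contra hcon
    push_neg at hcon
    have h1 := hum a ha
    have h2 := hum b hb
    rcases eq_or_lt_of_le hcon with heq | hlt
    · have : a = b := by rw [← h1.2, ← h2.2, heq]
      exact absurd this (ne_of_lt hab)
    · have := hmon h2.1 h1.1 hlt
      rw [h1.2, h2.2] at this; linarith
  have humI : uminus '' Icc 0 1 = Icc (1 / p1) 0 := by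
    apply Subset.antisymm
    · rintro _ ⟨t, ht, rfl⟩; exact (hum t ht).1
    · intro u hu
      have ht : g u ∈ Icc (0:ℝ) 1 := by rw [← himg2]; exact mem_image_of_mem g hu
      have h1 := hum (g u) ht
      exact ⟨g u, ht, hmon.injOn h1.1 hu h1.2⟩
  exact ⟨hant, hcont.continuousOn, himg1, hg0, hg1, hmon, hcont.continuousOn, himg2,
    hgend, huniq, ⟨uplus, hup, hupA, hupI⟩, ⟨uminus, hum, humM, humI⟩⟩
end
end

section
/- Let p>1 and define h(v) = (1-p·v)^{1/p}(1-v)^{-1}. Then h restricted to [0, 1/p] is a strictly decreasing continuous bijection from [0, 1/p] onto [0,1] (with h(0)=1 and h(1/p)=0), and h restricted to (-∞, 0] is strictly increasing with h(0)=1 and h(v) → 0 as v → -∞, hence a continuous increasing bijection from (-∞, 0] onto (0,1]. Consequently, for every t ∈ (0,1] the equation h(v) = t has exactly one solution v⁺_p(t) in [0, 1/p] and exactly one solution v⁻_p(t) in (-∞, 0]; v⁺_p is a decreasing bijection of [0,1] onto [0,1/p], and v⁻_p is increasing on (0,1] with v⁻_p(t) → -∞ as t → 0⁺. -/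
open Set Filter

noncomputable section

lemma aux_deriv (p : ℝ) (hp : 1 < p) (v : ℝ) (hv : p * v < 1) :
    HasDerivAt (fun v : ℝ => (1 - p * v) ^ (1 / p) * (1 - v)⁻¹)
      ((1 - p * v) ^ (1 / p - 1) * (v * (1 - p)) / (1 - v) ^ 2) v := by
  have hp0 : 0 < p := lt_trans one_pos hp
  have hb : 0 < 1 - p * v := by linarith
  have hv1 : v < 1 := by
    rcases le_or_gt 0 v with h0 | h0
    · nlinarith
    · linarith
  have h1v : (0:ℝ) < 1 - v := by linarith
  have d1 : HasDerivAt (fun v : ℝ => 1 - p * v) (-p) v := by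
    simpa using ((hasDerivAt_id v).const_mul p).const_sub 1
  have d2 : HasDerivAt (fun v : ℝ => (1 - p * v) ^ (1 / p)) (-p * (1/p) * (1 - p*v) ^ (1/p - 1)) v :=
    d1.rpow_const (Or.inl (ne_of_gt hb))
  have d3 : HasDerivAt (fun v : ℝ => 1 - v) (-1) v := by
    simpa using (hasDerivAt_id v).const_sub 1
  have d4 : HasDerivAt (fun v : ℝ => (1 - v)⁻¹) (-(-1) / (1 - v)^2) v :=
    d3.inv (ne_of_gt h1v)
  have d5 := d2.mul d4
  refine d5.congr_deriv ?_
  have key : (1 - p*v) ^ (1/p) = (1 - p*v) ^ (1/p - 1) * (1 - p*v) := by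
    rw [← Real.rpow_add_one (ne_of_gt hb)]
    ring_nf
  rw [key]
  field_simp
  ring

lemma aux_cont (p : ℝ) (hp : 1 < p) :
    ContinuousOn (fun v : ℝ => (1 - p * v) ^ (1 / p) * (1 - v)⁻¹) (Iio 1) := by
  apply ContinuousOn.mul
  · intro x hx
    exact (ContinuousAt.rpow_const (by fun_prop) (Or.inr (by positivity))).continuousWithinAt
  · exact ContinuousOn.inv₀ (by fun_prop)
      (fun x hx => by simp only [mem_Iio] at hx; intro hc; linarith [sub_eq_zero.mp hc])

/-- The function `h(v) = (1-p·v)^{1/p}(1-v)⁻¹` (with `p > 1`) is a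
strictly decreasing continuous bijection of `[0,1/p]` onto `[0,1]`, and on `(-∞,0]` it is
strictly increasing with `h(0) = 1` and `h(v) → 0` as `v → -∞`, hence a continuous
increasing bijection of `(-∞,0]` onto `(0,1]`; consequently for every `t ∈ (0,1]` the
equation `h(v) = t` has exactly one solution `v⁺_p(t)` in `[0,1/p]` and exactly one
solution `v⁻_p(t)` in `(-∞,0]`; `v⁺_p` is a decreasing bijection of `[0,1]` onto `[0,1/p]`
and `v⁻_p` is increasing on `(0,1]` with `v⁻_p(t) → -∞` as `t → 0⁺`. -/
theorem RH_defining_equation_solutions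
    (p : ℝ) (hp : 1 < p)
    (h : ℝ → ℝ) (hh : ∀ v : ℝ, h v = (1 - p * v) ^ (1 / p) * (1 - v)⁻¹) :
    StrictAntiOn h (Icc 0 (1 / p)) ∧ ContinuousOn h (Icc 0 (1 / p)) ∧
    h '' Icc 0 (1 / p) = Icc 0 1 ∧ h 0 = 1 ∧ h (1 / p) = 0 ∧
    StrictMonoOn h (Iic 0) ∧ ContinuousOn h (Iic 0) ∧
    Tendsto h atBot (nhds 0) ∧ h '' Iic 0 = Ioc 0 1 ∧
    (∀ t ∈ Ioc (0:ℝ) 1,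
      (∃! v, v ∈ Icc (0:ℝ) (1 / p) ∧ h v = t) ∧ (∃! v, v ∈ Iic (0:ℝ) ∧ h v = t)) ∧
    (∃ vplus : ℝ → ℝ,
      (∀ t ∈ Icc (0:ℝ) 1, vplus t ∈ Icc (0:ℝ) (1 / p) ∧ h (vplus t) = t) ∧
      StrictAntiOn vplus (Icc 0 1) ∧ vplus '' Icc 0 1 = Icc 0 (1 / p)) ∧
    (∃ vminus : ℝ → ℝ,
      (∀ t ∈ Ioc (0:ℝ) 1, vminus t ∈ Iic (0:ℝ) ∧ h (vminus t) = t) ∧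
      StrictMonoOn vminus (Ioc 0 1) ∧
      Tendsto vminus (nhdsWithin 0 (Ioi 0)) atBot) := by

  have hfun : h = fun v : ℝ => (1 - p * v) ^ (1 / p) * (1 - v)⁻¹ := funext hh
  subst hfun
  set h : ℝ → ℝ := fun v : ℝ => (1 - p * v) ^ (1 / p) * (1 - v)⁻¹ with hdef
  have hp0 : (0:ℝ) < p := lt_trans one_pos hp
  have hip : (0:ℝ) < 1 / p := by positivity
  have hip1 : 1 / p < 1 := by rw [div_lt_one hp0]; exact hp
  have hsub1 : Icc (0:ℝ) (1/p) ⊆ Iio 1 := fun x hx => lt_of_le_of_lt hx.2 hip1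
  have hsub2 : Iic (0:ℝ) ⊆ Iio 1 := fun x hx => mem_Iio.mpr (lt_of_le_of_lt hx one_pos)
  -- continuity
  have cont1 : ContinuousOn h (Icc 0 (1/p)) := (aux_cont p hp).mono hsub1
  have cont2 : ContinuousOn h (Iic 0) := (aux_cont p hp).mono hsub2
  -- values
  have h0 : h 0 = 1 := by simp [hdef, Real.one_rpow]
  have h1p : h (1/p) = 0 := by
    have he : 1 - p * (1/p) = 0 := by field_simp; ring
    show (1 - p * (1/p)) ^ (1/p) * (1 - 1/p)⁻¹ = 0
    rw [he, Real.zero_rpow (by positivity : (1:ℝ)/p ≠ 0), zero_mul]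
  -- strict monotonicity
  have sa : StrictAntiOn h (Icc 0 (1/p)) := by
    apply strictAntiOn_of_deriv_neg (convex_Icc _ _) cont1
    intro x hx
    rw [interior_Icc] at hx
    have hx1 : p * x < 1 := by
      have := hx.2; rw [lt_div_iff₀ hp0] at this; linarith [this]
    rw [(aux_deriv p hp x hx1).deriv]
    have hb : (0:ℝ) < 1 - p * x := by linarith
    have h1x : (0:ℝ) < 1 - x := by nlinarith [hx.1]
    apply div_neg_of_neg_of_pos
    · apply mul_neg_of_pos_of_neg (Real.rpow_pos_of_pos hb _)
      nlinarith [hx.1]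
    · positivity
  have sm : StrictMonoOn h (Iic 0) := by
    apply strictMonoOn_of_deriv_pos (convex_Iic _) cont2
    intro x hx
    rw [interior_Iic] at hx
    rw [mem_Iio] at hx
    have hx1 : p * x < 1 := by nlinarith
    rw [(aux_deriv p hp x hx1).deriv]
    have hb : (0:ℝ) < 1 - p * x := by linarith
    have h1x : (0:ℝ) < 1 - x := by linarith
    apply div_pos
    · apply mul_pos (Real.rpow_pos_of_pos hb _)
      nlinarith
    · positivity
  -- positivity on Iic 0
  have hpos : ∀ v : ℝ, v ≤ 0 → 0 < h v := by
    intro v hv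
    have hb : (0:ℝ) < 1 - p * v := by nlinarith
    have h1v : (0:ℝ) < 1 - v := by linarith
    exact mul_pos (Real.rpow_pos_of_pos hb _) (inv_pos.mpr h1v)
  -- tendsto atBot
  have htend : Tendsto h atBot (nhds 0) := by
    have hub : ∀ v : ℝ, v ≤ 0 → h v ≤ p ^ (1/p) * (1 - v) ^ (1/p - 1) := by
      intro v hv
      have h1v : (0:ℝ) < 1 - v := by linarith
      have hb : (0:ℝ) ≤ 1 - p * v := by nlinarith
      have hle : 1 - p * v ≤ p * (1 - v) := by nlinarith
      have step1 : (1 - p * v) ^ (1/p) ≤ (p * (1 - v)) ^ (1/p) :=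
        Real.rpow_le_rpow hb hle (by positivity)
      have step2 : (p * (1 - v)) ^ (1/p) = p ^ (1/p) * (1 - v) ^ (1/p) :=
        Real.mul_rpow (le_of_lt hp0) (le_of_lt h1v)
      have step3 : (1 - v) ^ (1/p) * (1 - v)⁻¹ = (1 - v) ^ (1/p - 1) := by
        rw [Real.rpow_sub h1v, Real.rpow_one, div_eq_mul_inv ((1-v) ^ (1/p)) (1-v)]
      calc h v ≤ (p * (1 - v)) ^ (1/p) * (1 - v)⁻¹ := by
            apply mul_le_mul_of_nonneg_right step1 (by positivity)
        _ = p ^ (1/p) * ((1 - v) ^ (1/p) * (1 - v)⁻¹) := by rw [step2]; ring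
        _ = p ^ (1/p) * (1 - v) ^ (1/p - 1) := by rw [step3]
    have hrhs : Tendsto (fun v : ℝ => p ^ (1/p) * (1 - v) ^ (1/p - 1)) atBot (nhds 0) := by
      have t1 : Tendsto (fun v : ℝ => 1 - v) atBot atTop := by
        apply tendsto_atTop_add_const_left
        exact tendsto_neg_atBot_atTop
      have t2 : Tendsto (fun x : ℝ => x ^ (1/p - 1)) atTop (nhds 0) := by
        have : (1:ℝ)/p - 1 = -(1 - 1/p) := by ring
        rw [this]
        exact tendsto_rpow_neg_atTop (by linarith)
      have := (t2.comp t1).const_mul (p ^ (1/p))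
      simpa using this
    apply tendsto_of_tendsto_of_tendsto_of_le_of_le' tendsto_const_nhds hrhs
    · filter_upwards [eventually_le_atBot (0:ℝ)] with v hv
      exact le_of_lt (hpos v hv)
    · filter_upwards [eventually_le_atBot (0:ℝ)] with v hv
      exact hub v hv
  -- images
  have mem0 : (0:ℝ) ∈ Icc (0:ℝ) (1/p) := ⟨le_refl _, le_of_lt hip⟩
  have mem1p : (1/p) ∈ Icc (0:ℝ) (1/p) := ⟨le_of_lt hip, le_refl _⟩
  have img1 : h '' Icc 0 (1/p) = Icc 0 1 := by
    apply Subset.antisymm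
    · rintro y ⟨x, hx, rfl⟩
      constructor
      · rw [← h1p]; exact sa.antitoneOn hx mem1p hx.2
      · rw [← h0]; exact sa.antitoneOn mem0 hx hx.1
    · have := intermediate_value_Icc' (le_of_lt hip) cont1
      rw [h1p, h0] at this
      exact this
  have img2 : h '' Iic 0 = Ioc 0 1 := by
    apply Subset.antisymm
    · rintro y ⟨x, hx, rfl⟩
      exact ⟨hpos x hx, by rw [← h0]; exact sm.monotoneOn hx (self_mem_Iic) hx⟩
    · rintro t ⟨ht0, ht1⟩
      obtain ⟨v0, hv0lt, hv0le⟩ : ∃ v0 : ℝ, h v0 < t ∧ v0 ≤ 0 := by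
        have e1 : ∀ᶠ v in atBot, h v < t := htend.eventually_lt_const ht0
        exact (e1.and (eventually_le_atBot 0)).exists
      have : t ∈ Icc (h v0) (h 0) := ⟨le_of_lt hv0lt, by rw [h0]; exact ht1⟩
      have hsub : Icc v0 (0:ℝ) ⊆ Iic 0 := Icc_subset_Iic_self
      have := intermediate_value_Icc hv0le (cont2.mono hsub) this
      exact image_mono hsub this
  -- unique solutions
  have uniq : ∀ t ∈ Ioc (0:ℝ) 1,
      (∃! v, v ∈ Icc (0:ℝ) (1 / p) ∧ h v = t) ∧ (∃! v, v ∈ Iic (0:ℝ) ∧ h v = t) := by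
    intro t ht
    constructor
    · obtain ⟨v, hv, hveq⟩ : t ∈ h '' Icc 0 (1/p) := by
        rw [img1]; exact ⟨le_of_lt ht.1, ht.2⟩
      exact ⟨v, ⟨hv, hveq⟩, fun y ⟨hy, hyeq⟩ => sa.injOn hy hv (by rw [hyeq, hveq])⟩
    · obtain ⟨v, hv, hveq⟩ : t ∈ h '' Iic 0 := by rw [img2]; exact ht
      exact ⟨v, ⟨hv, hveq⟩, fun y ⟨hy, hyeq⟩ => sm.injOn hy hv (by rw [hyeq, hveq])⟩
  refine ⟨sa, cont1, img1, h0, h1p, sm, cont2, htend, img2, uniq, ?_, ?_⟩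
  · -- vplus
    set vplus := Function.invFunOn h (Icc 0 (1/p)) with hvp
    have hex : ∀ t ∈ Icc (0:ℝ) 1, ∃ a ∈ Icc (0:ℝ) (1/p), h a = t := by
      intro t ht
      have : t ∈ h '' Icc 0 (1/p) := by rw [img1]; exact ht
      obtain ⟨a, ha, haeq⟩ := this
      exact ⟨a, ha, haeq⟩
    have hmemp : ∀ t ∈ Icc (0:ℝ) 1, vplus t ∈ Icc (0:ℝ) (1/p) ∧ h (vplus t) = t :=
      fun t ht => ⟨Function.invFunOn_mem (hex t ht), Function.invFunOn_eq (hex t ht)⟩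
    have hanti : StrictAntiOn vplus (Icc 0 1) := by
      intro t1 ht1 t2 ht2 hlt
      by_contra hcon
      push_neg at hcon
      have := sa.antitoneOn (hmemp t1 ht1).1 (hmemp t2 ht2).1 hcon
      rw [(hmemp t1 ht1).2, (hmemp t2 ht2).2] at this
      linarith
    refine ⟨vplus, hmemp, hanti, ?_⟩
    apply Subset.antisymm
    · rintro y ⟨t, ht, rfl⟩
      exact (hmemp t ht).1
    · intro v hv
      have hvimg : h v ∈ Icc (0:ℝ) 1 := by rw [← img1]; exact mem_image_of_mem h hv
      refine ⟨h v, hvimg, ?_⟩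
      exact sa.injOn (hmemp _ hvimg).1 hv (hmemp _ hvimg).2
  · -- vminus
    set vminus := Function.invFunOn h (Iic 0) with hvm
    have hex : ∀ t ∈ Ioc (0:ℝ) 1, ∃ a ∈ Iic (0:ℝ), h a = t := by
      intro t ht
      have : t ∈ h '' Iic 0 := by rw [img2]; exact ht
      obtain ⟨a, ha, haeq⟩ := this
      exact ⟨a, ha, haeq⟩
    have hmemm : ∀ t ∈ Ioc (0:ℝ) 1, vminus t ∈ Iic (0:ℝ) ∧ h (vminus t) = t :=
      fun t ht => ⟨Function.invFunOn_mem (hex t ht), Function.invFunOn_eq (hex t ht)⟩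
    have hmono : StrictMonoOn vminus (Ioc 0 1) := by
      intro t1 ht1 t2 ht2 hlt
      by_contra hcon
      push_neg at hcon
      have := sm.monotoneOn (hmemm t2 ht2).1 (hmemm t1 ht1).1 hcon
      rw [(hmemm t1 ht1).2, (hmemm t2 ht2).2] at this
      linarith
    refine ⟨vminus, hmemm, hmono, ?_⟩
    rw [tendsto_atBot]
    intro b
    set b' := min b 0 with hb'
    have hb'0 : b' ≤ 0 := min_le_right _ _
    have hhb' : 0 < h b' := hpos b' hb'0
    set c := min (h b') 1 with hc
    have hc0 : 0 < c := lt_min hhb' one_pos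
    filter_upwards [Ioo_mem_nhdsGT_of_mem (⟨le_refl 0, hc0⟩ : (0:ℝ) ∈ Ico 0 c)] with t ht
    have htIoc : t ∈ Ioc (0:ℝ) 1 := ⟨ht.1, le_of_lt (lt_of_lt_of_le ht.2 (min_le_right _ _))⟩
    have hlt : h (vminus t) < h b' := by
      rw [(hmemm t htIoc).2]
      exact lt_of_lt_of_le ht.2 (min_le_left _ _)
    have : vminus t < b' := by
      by_contra hcon
      push_neg at hcon
      have := sm.monotoneOn (mem_Iic.mpr hb'0) (hmemm t htIoc).1 hcon
      linarith
    exact le_trans (le_of_lt this) (min_le_left _ _)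
end
end
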